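/- arXiv:2210.09885 — 7 statements merged into one kernel-verified Lean document; each statement's English description precedes it below -/
import Mathlib

section
/- Let E be a real inner product space and let F : E → ℝ be convex and differentiable with gradient ∇F. Let x₀, x₁, …, x_m ∈ E and let λ₀, …, λ_m ≥ 0 with Σ_j λ_j = 1. Then Σ_j λ_j F(x_j) − F(Σ_j λ_j x_j) ≤ (1/2) Σ_i Σ_j λ_i λ_j ⟨∇F(x_i) − ∇F(x_j), x_i − x_j⟩. -/
open scoped RealInnerProductSpace
open Finset

/-!
By convexity, `F` lies above each of its tangent planes; taking the tangent plane at `x i` and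
evaluating at the barycentre `x̄ = ∑ j, l j • x j` gives `F (x i) - F x̄ ≤ ⟪∇F (x i), x i - x̄⟫`.
Averaging with the weights `l i` bounds the Jensen gap by `∑ i, l i * ⟪∇F (x i), x i - x̄⟫`, and
since `x i - x̄ = ∑ j, l j • (x i - x j)`, symmetrising this sum in `i` and `j` turns it into the
half double sum of `⟪∇F (x i) - ∇F (x j), x i - x j⟫`.
-/

theorem ConvexOn.apply_sub_le_sub_of_hasFDerivAt {E : Type*} [NormedAddCommGroup E]
    [NormedSpace ℝ E] {s : Set E} {f : E → ℝ} {f' : E →L[ℝ] ℝ} {a b : E}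
    (hf : ConvexOn ℝ s f) (ha : a ∈ s) (hb : b ∈ s) (hfa : HasFDerivAt f f' a) :
    f' (b - a) ≤ f b - f a := by
  have hline : ConvexOn ℝ (AffineMap.lineMap (k := ℝ) a b ⁻¹' s) (f ∘ AffineMap.lineMap a b) :=
    hf.comp_affineMap _
  have hderiv : HasDerivAt (f ∘ AffineMap.lineMap (k := ℝ) a b) (f' (b - a)) 0 :=
    ((AffineMap.lineMap_apply_zero (k := ℝ) a b).symm ▸ hfa).comp_hasDerivAt 0
      AffineMap.hasDerivAt_lineMap
  simpa [slope] using hline.le_slope_of_hasDerivAt (by simpa) (by simpa) one_pos hderiv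

section InnerProductSpace

variable {E : Type*} [NormedAddCommGroup E] [InnerProductSpace ℝ E]

theorem ConvexOn.inner_gradient_le_sub [CompleteSpace E] {s : Set E} {f : E → ℝ} {f' a b : E}
    (hf : ConvexOn ℝ s f) (ha : a ∈ s) (hb : b ∈ s) (hfa : HasGradientAt f f' a) :
    ⟪f', b - a⟫ ≤ f b - f a := by
  simpa using hf.apply_sub_le_sub_of_hasFDerivAt ha hb hfa.hasFDerivAt

variable {ι : Type*} [Fintype ι]

theorem ConvexOn.sum_mul_sub_le_sum_mul_inner_gradient [CompleteSpace E] {s : Set E}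
    {f : E → ℝ} {g x : ι → E} {w : ι → ℝ} (hf : ConvexOn ℝ s f) (hx : ∀ i, x i ∈ s)
    (hg : ∀ i, HasGradientAt f (g i) (x i)) (hw₀ : ∀ i, 0 ≤ w i) (hw₁ : ∑ i, w i = 1) :
    ∑ i, w i * f (x i) - f (∑ i, w i • x i) ≤ ∑ i, w i * ⟪g i, x i - ∑ j, w j • x j⟫ := by
  set c := ∑ j, w j • x j
  have hc : c ∈ s := hf.1.sum_mem (fun i _ ↦ hw₀ i) hw₁ fun i _ ↦ hx i
  have htangent : ∀ i, f (x i) - f c ≤ ⟪g i, x i - c⟫ := fun i ↦ by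
    have := hf.inner_gradient_le_sub (hx i) hc (hg i)
    rw [← neg_sub, inner_neg_right] at this
    linarith
  calc ∑ i, w i * f (x i) - f c = ∑ i, w i * (f (x i) - f c) := by
        simp only [mul_sub, sum_sub_distrib, ← sum_mul, hw₁, one_mul]
    _ ≤ ∑ i, w i * ⟪g i, x i - c⟫ :=
        sum_le_sum fun i _ ↦ mul_le_mul_of_nonneg_left (htangent i) (hw₀ i)

theorem inner_sub_sum_smul_eq_sum_mul_inner {w : ι → ℝ} (hw₁ : ∑ i, w i = 1) (v y : E)
    (x : ι → E) : ⟪v, y - ∑ j, w j • x j⟫ = ∑ j, w j * ⟪v, y - x j⟫ := by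
  simp only [inner_sub_right, inner_sum, real_inner_smul_right, mul_sub, sum_sub_distrib,
    ← sum_mul, hw₁, one_mul]

theorem sum_mul_inner_sub_sum_smul {w : ι → ℝ} (hw₁ : ∑ i, w i = 1) (g x : ι → E) :
    ∑ i, w i * ⟪g i, x i - ∑ j, w j • x j⟫
      = (1/2) * ∑ i, ∑ j, w i * w j * ⟪g i - g j, x i - x j⟫ := by
  set S := ∑ i, ∑ j, w i * w j * ⟪g i, x i - x j⟫
  have hlhs : ∑ i, w i * ⟪g i, x i - ∑ j, w j • x j⟫ = S := by
    simp only [inner_sub_sum_smul_eq_sum_mul_inner hw₁, mul_sum, mul_assoc, S]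
  have hswap : ∑ i, ∑ j, w i * w j * ⟪g j, x i - x j⟫ = -S := by
    rw [sum_comm]
    simp only [S, ← sum_neg_distrib]
    refine sum_congr rfl fun i _ ↦ sum_congr rfl fun j _ ↦ ?_
    rw [← neg_sub (x i), inner_neg_right]
    ring
  rw [hlhs]
  simp only [inner_sub_left, mul_sub, sum_sub_distrib, hswap, S]
  ring

end InnerProductSpace

/-- Jensen-gap bound for a convex differentiable function on an inner product
space: the gap is bounded by half the double sum of gradient–increment inner
products. -/
theorem stmt_9 {E : Type*} [NormedAddCommGroup E] [InnerProductSpace ℝ E] [CompleteSpace E]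
    (F : E → ℝ) (F' : E → E)
    (hconv : ConvexOn ℝ Set.univ F)
    (hgrad : ∀ x, HasGradientAt F (F' x) x)
    (m : ℕ) (x : Fin (m + 1) → E) (l : Fin (m + 1) → ℝ)
    (hl : ∀ j, 0 ≤ l j) (hls : ∑ j, l j = 1) :
    ∑ j, l j * F (x j) - F (∑ j, l j • x j)
      ≤ (1/2) * ∑ i, ∑ j, l i * l j * ⟪F' (x i) - F' (x j), x i - x j⟫ := by
  rw [← sum_mul_inner_sub_sum_smul hls]
  exact hconv.sum_mul_sub_le_sum_mul_inner_gradient (fun _ ↦ Set.mem_univ _)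
    (fun i ↦ hgrad (x i)) hl hls
end

section
/- Let E be a real inner product space, let F : E → ℝ be convex and differentiable with gradient ∇F, and suppose ∇F is L-Lipschitz (‖∇F(x) − ∇F(y)‖ ≤ L‖x − y‖ for all x, y). Let x₀, x₁, …, x_m ∈ E with ‖x_i − x_j‖ ≤ D for all i, j, and let λ₀, …, λ_m ≥ 0 with Σ_j λ_j = 1. Then 0 ≤ Σ_j λ_j F(x_j) − F(Σ_j λ_j x_j) ≤ (1/2) L D². -/
open InnerProductSpace

lemma descent_lemma {E : Type*} [NormedAddCommGroup E] [InnerProductSpace ℝ E] [CompleteSpace E]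
    (F : E → ℝ) (F' : E → E)
    (hgrad : ∀ x, HasGradientAt F (F' x) x)
    (L : ℝ) (hLip : ∀ x y : E, ‖F' x - F' y‖ ≤ L * ‖x - y‖)
    (a b : E) :
    F b ≤ F a + inner ℝ (F' a) (b - a) + L / 2 * ‖b - a‖ ^ 2 := by
  set d := b - a with hd
  have hline : ∀ t : ℝ, HasDerivAt (fun t : ℝ => F (a + t • d))
      (inner ℝ (F' (a + t • d)) d : ℝ) t := by
    intro t
    have h1 : HasDerivAt (fun t : ℝ => a + t • d) d t := by
      simpa using ((hasDerivAt_id t).smul_const d).const_add a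
    have h2 := (hgrad (a + t • d)).hasFDerivAt.comp_hasDerivAt t h1
    simpa [toDual_apply_apply, Function.comp_def] using h2
  set h : ℝ → ℝ := fun t => F (a + t • d) - t * inner ℝ (F' a) d - L / 2 * t ^ 2 * ‖d‖ ^ 2 with hh
  have hderiv : ∀ t : ℝ, HasDerivAt h
      ((inner ℝ (F' (a + t • d)) d : ℝ) - inner ℝ (F' a) d - L * t * ‖d‖ ^ 2) t := by
    intro t
    have h1 : HasDerivAt (fun t : ℝ => t * inner ℝ (F' a) d) (inner ℝ (F' a) d : ℝ) t := by
      simpa using (hasDerivAt_id t).mul_const (inner ℝ (F' a) d : ℝ)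
    have h2 : HasDerivAt (fun t : ℝ => L / 2 * t ^ 2 * ‖d‖ ^ 2) (L * t * ‖d‖ ^ 2) t := by
      have := ((hasDerivAt_pow 2 t).const_mul (L / 2)).mul_const (‖d‖ ^ 2)
      refine this.congr_deriv ?_
      ring
    exact ((hline t).sub h1).sub h2
  have hmono : AntitoneOn h (Set.Icc 0 1) := by
    apply antitoneOn_of_deriv_nonpos (convex_Icc 0 1)
    · have hdiff : Differentiable ℝ h := fun t => (hderiv t).differentiableAt
      exact hdiff.continuous.continuousOn
    · intro t _
      exact (hderiv t).differentiableAt.differentiableWithinAt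
    · intro t ht
      rw [(hderiv t).deriv]
      have ht0 : 0 ≤ t := (Set.mem_Ioo.mp (by simpa using ht)).1.le
      have h1 : (inner ℝ (F' (a + t • d)) d : ℝ) - inner ℝ (F' a) d
          = inner ℝ (F' (a + t • d) - F' a) d := by rw [inner_sub_left]
      rw [h1, sub_nonpos]
      calc (inner ℝ (F' (a + t • d) - F' a) d : ℝ)
          ≤ ‖F' (a + t • d) - F' a‖ * ‖d‖ := real_inner_le_norm _ _
        _ ≤ L * ‖(a + t • d) - a‖ * ‖d‖ := by
            have := hLip (a + t • d) a
            nlinarith [norm_nonneg d]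
        _ = L * t * ‖d‖ ^ 2 := by
            rw [add_sub_cancel_left, norm_smul, Real.norm_eq_abs, abs_of_nonneg ht0]
            ring
  have key := hmono (Set.left_mem_Icc.mpr zero_le_one) (Set.right_mem_Icc.mpr zero_le_one)
      zero_le_one
  simp only [hh] at key
  simp only [zero_smul, add_zero, one_smul, zero_pow, mul_zero, zero_mul, sub_zero,
    one_pow, mul_one, one_mul] at key
  have : a + d = b := by rw [hd]; abel
  rw [this] at key
  linarith


/-- Secant-approximation error bound: for a convex differentiable `F` with
`L`-Lipschitz gradient and points `x j` of pairwise distance at most `D`,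
the Jensen gap `∑ λⱼ F(xⱼ) − F(∑ λⱼ xⱼ)` lies in `[0, (1/2) L D²]`. -/
theorem stmt_10 {E : Type*} [NormedAddCommGroup E] [InnerProductSpace ℝ E] [CompleteSpace E]
    (F : E → ℝ) (F' : E → E)
    (hconv : ConvexOn ℝ Set.univ F)
    (hgrad : ∀ x, HasGradientAt F (F' x) x)
    (L : ℝ) (hL : 0 ≤ L)
    (hLip : ∀ x y : E, ‖F' x - F' y‖ ≤ L * ‖x - y‖)
    (m : ℕ) (x : Fin (m + 1) → E) (D : ℝ)
    (hD : ∀ i j, ‖x i - x j‖ ≤ D)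
    (l : Fin (m + 1) → ℝ) (hl : ∀ j, 0 ≤ l j) (hls : ∑ j, l j = 1) :
    0 ≤ ∑ j, l j * F (x j) - F (∑ j, l j • x j) ∧
    ∑ j, l j * F (x j) - F (∑ j, l j • x j) ≤ (1/2) * L * D^2 := by
  have hD0 : 0 ≤ D := le_trans (by simpa using norm_nonneg (x 0 - x 0)) (hD 0 0)
  set c : E := ∑ j, l j • x j with hc
  constructor
  · have := hconv.map_sum_le (t := Finset.univ) (fun i _ => hl i) (by simpa using hls)
      (fun i _ => Set.mem_univ (x i))
    simpa [smul_eq_mul] using sub_nonneg.mpr this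
  · -- distance from each x j to c
    have hdist : ∀ j, ‖x j - c‖ ≤ D := by
      intro j
      have h1 : x j - c = ∑ k, l k • (x j - x k) := by
        simp only [smul_sub, Finset.sum_sub_distrib, ← Finset.sum_smul, hls, one_smul, hc]
      rw [h1]
      calc ‖∑ k, l k • (x j - x k)‖ ≤ ∑ k, ‖l k • (x j - x k)‖ := norm_sum_le _ _
        _ ≤ ∑ k, l k * D := by
            apply Finset.sum_le_sum
            intro k _
            rw [norm_smul, Real.norm_eq_abs, abs_of_nonneg (hl k)]
            exact mul_le_mul_of_nonneg_left (hD j k) (hl k)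
        _ = D := by rw [← Finset.sum_mul, hls, one_mul]
    have hkey : ∀ j, F (x j) ≤ F c + inner ℝ (F' c) (x j - c) + L / 2 * D ^ 2 := by
      intro j
      have h1 := descent_lemma F F' hgrad L hLip c (x j)
      have h2 : L / 2 * ‖x j - c‖ ^ 2 ≤ L / 2 * D ^ 2 :=
        mul_le_mul_of_nonneg_left (pow_le_pow_left₀ (norm_nonneg _) (hdist j) 2)
          (by linarith : (0:ℝ) ≤ L / 2)
      linarith
    have hzero : ∑ j, l j • (x j - c) = (0 : E) := by
      simp only [smul_sub, Finset.sum_sub_distrib, ← Finset.sum_smul, hls, one_smul, hc,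
        sub_self]
    have hsum : ∑ j, l j * F (x j) ≤ F c + L / 2 * D ^ 2 := by
      calc ∑ j, l j * F (x j)
          ≤ ∑ j, l j * (F c + inner ℝ (F' c) (x j - c) + L / 2 * D ^ 2) := by
            apply Finset.sum_le_sum
            intro j _
            exact mul_le_mul_of_nonneg_left (hkey j) (hl j)
        _ = (∑ j, l j) * (F c + L / 2 * D ^ 2) + inner ℝ (F' c) (∑ j, l j • (x j - c)) := by
            rw [inner_sum, Finset.sum_mul]
            simp only [real_inner_smul_right]
            rw [← Finset.sum_add_distrib]
            apply Finset.sum_congr rfl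
            intro j _
            ring
        _ = F c + L / 2 * D ^ 2 := by rw [hzero, inner_zero_right, hls]; ring
    linarith
end

section
/- Let θ_i, θ_j, ψ_i, ψ_j, ω_i, ω_j be positive real numbers and let α ∈ (0, 1]. Define θ̆_i = α θ_i + (1−α) θ_j, θ̆_j = (1−α) θ_i + α θ_j, and similarly ψ̆_i, ψ̆_j from ψ_i, ψ_j and ω̆_i, ω̆_j from ω_i, ω_j. If (θ_i/θ_j − ψ_i/ψ_j)·(ω_i/ω_j − ψ_i/ψ_j) ≥ 0, then θ̆_i ω̆_i / ψ̆_i + θ̆_j ω̆_j / ψ̆_j ≤ θ_i ω_i / ψ_i + θ_j ω_j / ψ_j. -/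
/-- Adjustment lemma, first case (`α ∈ (0,1]`): mixing two coordinates of
`(θ, ψ, ω)` by the doubly stochastic matrix `[[α, 1−α],[1−α, α]]` decreases
the two-term sum of ratios, under the sign condition
`(θᵢ/θⱼ − ψᵢ/ψⱼ)(ωᵢ/ωⱼ − ψᵢ/ψⱼ) ≥ 0`. -/
theorem stmt_11 (θi θj ψi ψj ωi ωj α : ℝ)
    (hθi : 0 < θi) (hθj : 0 < θj) (hψi : 0 < ψi) (hψj : 0 < ψj)
    (hωi : 0 < ωi) (hωj : 0 < ωj)
    (hα0 : 0 < α) (hα1 : α ≤ 1)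
    (hsign : (θi / θj - ψi / ψj) * (ωi / ωj - ψi / ψj) ≥ 0) :
    (α * θi + (1 - α) * θj) * (α * ωi + (1 - α) * ωj) / (α * ψi + (1 - α) * ψj)
      + ((1 - α) * θi + α * θj) * ((1 - α) * ωi + α * ωj) / ((1 - α) * ψi + α * ψj)
      ≤ θi * ωi / ψi + θj * ωj / ψj := by
  have hb : (0:ℝ) ≤ 1 - α := by linarith
  have hPi : 0 < α * ψi + (1 - α) * ψj := by nlinarith
  have hPj : 0 < (1 - α) * ψi + α * ψj := by nlinarith
  have hAB : 0 ≤ (θi * ψj - θj * ψi) * (ωi * ψj - ωj * ψi) := by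
    have key : (θi * ψj - θj * ψi) * (ωi * ψj - ωj * ψi)
        = (θi / θj - ψi / ψj) * (ωi / ωj - ψi / ψj) * (θj * ψj * (ωj * ψj)) := by
      field_simp
    rw [key]
    exact mul_nonneg hsign (by positivity)
  have main : θi * ωi / ψi + θj * ωj / ψj
      - ((α * θi + (1 - α) * θj) * (α * ωi + (1 - α) * ωj) / (α * ψi + (1 - α) * ψj)
        + ((1 - α) * θi + α * θj) * ((1 - α) * ωi + α * ωj) / ((1 - α) * ψi + α * ψj))
      = α * (1 - α) * ((θi * ψj - θj * ψi) * (ωi * ψj - ωj * ψi)) * (ψi + ψj)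
        / (ψi * ψj * ((α * ψi + (1 - α) * ψj) * ((1 - α) * ψi + α * ψj))) := by
    field_simp
    ring
  have hnum : 0 ≤ α * (1 - α) * ((θi * ψj - θj * ψi) * (ωi * ψj - ωj * ψi)) * (ψi + ψj) :=
    mul_nonneg (mul_nonneg (mul_nonneg hα0.le hb) hAB) (by positivity)
  have hden : 0 < ψi * ψj * ((α * ψi + (1 - α) * ψj) * ((1 - α) * ψi + α * ψj)) := by positivity
  have := div_nonneg hnum hden.le
  linarith [main ▸ this]
end

section
/- Let θ_i, θ_j, ψ_i, ψ_j, ω_i, ω_j be positive real numbers and let α ≥ 1. Define θ̆_i = α θ_i + (1−α) θ_j, θ̆_j = (1−α) θ_i + α θ_j, and similarly ψ̆_i, ψ̆_j from ψ_i, ψ_j and ω̆_i, ω̆_j from ω_i, ω_j, and assume all six transformed values θ̆_i, θ̆_j, ψ̆_i, ψ̆_j, ω̆_i, ω̆_j are positive. If (θ_i/θ_j − ψ_i/ψ_j)·(ω_i/ω_j − ψ_i/ψ_j) ≤ 0, then θ̆_i ω̆_i / ψ̆_i + θ̆_j ω̆_j / ψ̆_j ≤ θ_i ω_i / ψ_i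 + θ_j ω_j / ψ_j. -/
/-!
With `D_θ = θi ψj - ψi θj` and `D_ω = ωi ψj - ψi ωj`, the decrease of the sum under the
mixing is exactly `α (α - 1) (ψi + ψj) (-D_θ D_ω) / (ψi ψj ψ̆i ψ̆j)`. For `α ≥ 1` every factor
is nonnegative, since the sign condition is `D_θ D_ω ≤ 0` divided by `θj ωj ψj²`.
-/

section Field

variable {K : Type*} [Field K]

theorem sum_div_sub_sum_mix_div (θi θj ψi ψj ωi ωj α : K)
    (hψi : ψi ≠ 0) (hψj : ψj ≠ 0)
    (hψi' : α * ψi + (1 - α) * ψj ≠ 0) (hψj' : (1 - α) * ψi + α * ψj ≠ 0) :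
    θi * ωi / ψi + θj * ωj / ψj
      - ((α * θi + (1 - α) * θj) * (α * ωi + (1 - α) * ωj) / (α * ψi + (1 - α) * ψj)
        + ((1 - α) * θi + α * θj) * ((1 - α) * ωi + α * ωj) / ((1 - α) * ψi + α * ψj))
      = α * (α - 1) * (ψi + ψj) * -((θi * ψj - ψi * θj) * (ωi * ψj - ψi * ωj))
        / (ψi * ψj * ((α * ψi + (1 - α) * ψj) * ((1 - α) * ψi + α * ψj))) := by
  rw [div_add_div _ _ hψi hψj, div_add_div _ _ hψi' hψj',
    div_sub_div _ _ (mul_ne_zero hψi hψj) (mul_ne_zero hψi' hψj')]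
  congr 1
  ring

theorem div_sub_div_mul_div_sub_div_eq (θi θj ψi ψj ωi ωj : K)
    (hθj : θj ≠ 0) (hψj : ψj ≠ 0) (hωj : ωj ≠ 0) :
    (θi / θj - ψi / ψj) * (ωi / ωj - ψi / ψj)
      = (θi * ψj - ψi * θj) * (ωi * ψj - ψi * ωj) / (θj * ωj * ψj ^ 2) := by
  field_simp

end Field

section OrderedField

variable {K : Type*} [Field K] [LinearOrder K] [IsStrictOrderedRing K]

theorem cross_mul_nonpos_of_ratio_sign (θi θj ψi ψj ωi ωj : K)
    (hθj : 0 < θj) (hψj : 0 < ψj) (hωj : 0 < ωj)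
    (hsign : (θi / θj - ψi / ψj) * (ωi / ωj - ψi / ψj) ≤ 0) :
    (θi * ψj - ψi * θj) * (ωi * ψj - ψi * ωj) ≤ 0 := by
  rwa [div_sub_div_mul_div_sub_div_eq θi θj ψi ψj ωi ωj hθj.ne' hψj.ne' hωj.ne',
    div_le_iff₀ (by positivity), zero_mul] at hsign

end OrderedField

theorem stmt_12_general (θi θj ψi ψj ωi ωj α : ℝ)
    (hθj : 0 < θj) (hψi : 0 < ψi) (hψj : 0 < ψj)
    (hωj : 0 < ωj)
    (hα : 1 ≤ α)
    (hψi' : 0 < α * ψi + (1 - α) * ψj) (hψj' : 0 < (1 - α) * ψi + α * ψj)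
    (hsign : (θi / θj - ψi / ψj) * (ωi / ωj - ψi / ψj) ≤ 0) :
    (α * θi + (1 - α) * θj) * (α * ωi + (1 - α) * ωj) / (α * ψi + (1 - α) * ψj)
      + ((1 - α) * θi + α * θj) * ((1 - α) * ωi + α * ωj) / ((1 - α) * ψi + α * ψj)
      ≤ θi * ωi / ψi + θj * ωj / ψj := by
  have hcross := cross_mul_nonpos_of_ratio_sign θi θj ψi ψj ωi ωj hθj hψj hωj hsign
  rw [← sub_nonneg, sum_div_sub_sum_mix_div θi θj ψi ψj ωi ωj α hψi.ne' hψj.ne' hψi'.ne' hψj'.ne']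
  have hα' : 0 ≤ α * (α - 1) := mul_nonneg (by linarith) (by linarith)
  have hψ : 0 ≤ ψi + ψj := by positivity
  exact div_nonneg (mul_nonneg (mul_nonneg hα' hψ) (neg_nonneg.mpr hcross)) (by positivity)

/-- Adjustment lemma, second case (`α ≥ 1`): mixing two coordinates of
`(θ, ψ, ω)` by `[[α, 1−α],[1−α, α]]` decreases the two-term sum of ratios,
under the reversed sign condition, provided the transformed entries remain
positive. -/
theorem stmt_12 (θi θj ψi ψj ωi ωj α : ℝ)
    (hθi : 0 < θi) (hθj : 0 < θj) (hψi : 0 < ψi) (hψj : 0 < ψj)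
    (hωi : 0 < ωi) (hωj : 0 < ωj)
    (hα : 1 ≤ α)
    (hθi' : 0 < α * θi + (1 - α) * θj) (hθj' : 0 < (1 - α) * θi + α * θj)
    (hψi' : 0 < α * ψi + (1 - α) * ψj) (hψj' : 0 < (1 - α) * ψi + α * ψj)
    (hωi' : 0 < α * ωi + (1 - α) * ωj) (hωj' : 0 < (1 - α) * ωi + α * ωj)
    (hsign : (θi / θj - ψi / ψj) * (ωi / ωj - ψi / ψj) ≤ 0) :
    (α * θi + (1 - α) * θj) * (α * ωi + (1 - α) * ωj) / (α * ψi + (1 - α) * ψj)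
      + ((1 - α) * θi + α * θj) * ((1 - α) * ωi + α * ωj) / ((1 - α) * ψi + α * ψj)
      ≤ θi * ωi / ψi + θj * ωj / ψj :=
  stmt_12_general θi θj ψi ψj ωi ωj α hθj hψi hψj hωj hα hψi' hψj' hsign
end

section
/- Let W ≥ d ≥ 2 be integers and let p, q ∈ ℝ^W be vectors with all entries positive and Σ_{i=1}^W p_i = Σ_{i=1}^W q_i = 1. Suppose there exists an index i₀ with d ≤ i₀ ≤ W such that p_{i₀} ≠ q_{i₀}. Define the W×d matrix M as follows: for columns j = 1, …, d−1, the entry M_{i,j} equals (Σ_{k=1}^{d−1} p_k) if i = j ≤ d−1, equals 0 if i ≤ d−1 and i ≠ j, and equals p_i if d ≤ i ≤ W; the last column is M_{i,d} = q_i for all i. Then M has full column rank d (and hence admits a left inverse). -/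
/-- The explicit `W×d` transition-matrix construction of the paper: with the
first `d−1` columns carrying a scaled identity block on the first `d−1` rows
and the vector `p` on the remaining rows, and last column equal to `q`, the
matrix has full column rank `d` (hence a left inverse), provided
`p i₀ ≠ q i₀` for some index `i₀ ≥ d−1` (0-indexed). -/
theorem stmt_14 (W d : ℕ) (hd : 2 ≤ d) (hW : d ≤ W)
    (p q : Fin W → ℝ) (hp : ∀ i, 0 < p i) (hq : ∀ i, 0 < q i)
    (hps : ∑ i, p i = 1) (hqs : ∑ i, q i = 1)
    (i₀ : Fin W) (hi₀ : d - 1 ≤ (i₀ : ℕ)) (hpq : p i₀ ≠ q i₀)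
    (M : Matrix (Fin W) (Fin d) ℝ)
    (hM : ∀ i j, M i j =
      if (j : ℕ) = d - 1 then q i
      else if (i : ℕ) < d - 1 then
        (if (i : ℕ) = (j : ℕ)
          then ∑ k ∈ Finset.univ.filter (fun k : Fin W => (k : ℕ) < d - 1), p k
          else 0)
      else p i) :
    M.rank = d ∧ ∃ L : Matrix (Fin d) (Fin W) ℝ, L * M = 1 := by
  have hd1 : d - 1 < d := by omega
  set lst : Fin d := ⟨d - 1, hd1⟩ with hlst
  set S : ℝ := ∑ k ∈ Finset.univ.filter (fun k : Fin W => (k : ℕ) < d - 1), p k with hS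
  have hSpos : 0 < S := by
    apply Finset.sum_pos (fun k _ => hp k)
    exact ⟨⟨0, by omega⟩, by simp; omega⟩
  -- column sums are 1
  have hcol : ∀ j : Fin d, ∑ i, M i j = 1 := by
    intro j
    by_cases hj : (j : ℕ) = d - 1
    · have e1 : ∀ i : Fin W, M i j = q i := fun i => by rw [hM, if_pos hj]
      rw [Finset.sum_congr rfl fun i _ => e1 i]
      exact hqs
    · have hjd : (j : ℕ) < d - 1 := by have := j.isLt; omega
      set jW : Fin W := ⟨(j : ℕ), by omega⟩ with hjW
      have e1 : ∀ i : Fin W,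
          M i j = if (i : ℕ) < d - 1 then (if i = jW then S else 0) else p i := by
        intro i
        rw [hM, if_neg hj]
        by_cases hi : (i : ℕ) < d - 1
        · rw [if_pos hi, if_pos hi]
          congr 1
          exact propext ⟨fun h => Fin.ext h, fun h => by rw [h]⟩
        · rw [if_neg hi, if_neg hi]
      rw [Finset.sum_congr rfl fun i _ => e1 i, Finset.sum_ite,
        Finset.sum_ite_eq' _ jW (fun _ => S)]
      have hmem : jW ∈ Finset.univ.filter (fun i : Fin W => (i : ℕ) < d - 1) := by
        simp [hjW, hjd]
      rw [if_pos hmem]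
      have := Finset.sum_filter_add_sum_filter_not Finset.univ
        (fun i : Fin W => (i : ℕ) < d - 1) p
      rw [hps] at this
      rw [← hS] at this
      linarith
  -- injectivity of mulVecLin
  have hinj : Function.Injective M.mulVecLin := by
    rw [← LinearMap.ker_eq_bot, LinearMap.ker_eq_bot']
    intro v hv
    have hrow : ∀ i, ∑ j, M i j * v j = 0 := by
      intro i
      have := congrFun hv i
      simpa [Matrix.mulVecLin, Matrix.mulVec, dotProduct] using this
    set T : ℝ := ∑ j ∈ Finset.univ.erase lst, v j with hT
    -- total sum: T + v lst = 0
    have htot : v lst + T = 0 := by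
      have h1 : ∑ j : Fin d, v j = 0 := by
        have : ∑ j : Fin d, (∑ i, M i j) * v j = 0 := by
          rw [Finset.sum_congr rfl fun j _ => Finset.sum_mul _ _ _]
          rw [Finset.sum_comm]
          exact Finset.sum_eq_zero fun i _ => hrow i
        rw [Finset.sum_congr rfl fun j _ => by rw [hcol j, one_mul]] at this
        exact this
      rw [← Finset.add_sum_erase _ v (Finset.mem_univ lst)] at h1
      exact h1
    -- rows with i ≥ d - 1
    have hrow_ge : ∀ i : Fin W, d - 1 ≤ (i : ℕ) → q i * v lst + p i * T = 0 := by
      intro i hi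
      have h := hrow i
      rw [← Finset.add_sum_erase _ _ (Finset.mem_univ lst)] at h
      have hMl : M i lst = q i := by rw [hM]; simp [hlst]
      have h2 : ∑ j ∈ Finset.univ.erase lst, M i j * v j = p i * T := by
        rw [hT, Finset.mul_sum]
        refine Finset.sum_congr rfl fun j hj => ?_
        have hjne : (j : ℕ) ≠ d - 1 := by
          intro hc
          exact (Finset.mem_erase.mp hj).1 (Fin.ext hc)
        rw [hM]
        simp [hjne, Nat.not_lt.mpr hi]
      rw [hMl, h2] at h
      exact h
    -- deduce T = 0 and v lst = 0
    have hTzero : T = 0 := by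
      have h := hrow_ge i₀ hi₀
      have hvl : v lst = -T := by linarith
      rw [hvl] at h
      have : (p i₀ - q i₀) * T = 0 := by ring_nf; ring_nf at h; linarith
      rcases mul_eq_zero.mp this with h' | h'
      · exact absurd (by linarith : p i₀ = q i₀) hpq
      · exact h'
    have hvlst : v lst = 0 := by rw [hTzero] at htot; linarith
    -- rows with i < d - 1 kill the other coordinates
    have hsmall : ∀ j : Fin d, (j : ℕ) < d - 1 → v j = 0 := by
      intro j hj
      set iW : Fin W := ⟨(j : ℕ), by have := j.isLt; omega⟩ with hiW
      have h := hrow iW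
      rw [← Finset.add_sum_erase _ _ (Finset.mem_univ lst)] at h
      have hMl : M iW lst = q iW := by rw [hM]; simp [hlst]
      have h2 : ∑ j' ∈ Finset.univ.erase lst, M iW j' * v j' = S * v j := by
        have e1 : ∀ j' ∈ Finset.univ.erase lst,
            M iW j' * v j' = if j' = j then S * v j' else 0 := by
          intro j' hj'
          have hjne : (j' : ℕ) ≠ d - 1 := fun hc =>
            (Finset.mem_erase.mp hj').1 (Fin.ext hc)
          rw [hM, if_neg hjne, if_pos (show (iW : ℕ) < d - 1 from hj)]
          by_cases hc : j' = j
          · rw [if_pos hc, if_pos (show (iW : ℕ) = (j' : ℕ) by rw [hc])]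
          · rw [if_neg (fun hcc => hc (Fin.ext hcc.symm)), zero_mul, if_neg hc]
        rw [Finset.sum_congr rfl e1, Finset.sum_ite_eq' _ j (fun j' => S * v j')]
        have hjm : j ∈ Finset.univ.erase lst := by
          refine Finset.mem_erase.mpr ⟨?_, Finset.mem_univ j⟩
          intro hc
          rw [hc] at hj
          simp [hlst] at hj
        rw [if_pos hjm]
      rw [hMl, h2, hvlst, mul_zero, zero_add] at h
      rcases mul_eq_zero.mp h with h' | h'
      · exact absurd h' (ne_of_gt hSpos)
      · exact h'
    funext j
    by_cases hj : (j : ℕ) = d - 1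
    · have : j = lst := Fin.ext hj
      rw [this]; exact hvlst
    · exact hsmall j (by have := j.isLt; omega)
  constructor
  · rw [Matrix.rank, LinearMap.finrank_range_of_inj hinj]
    simp
  · obtain ⟨g, hg⟩ := (Matrix.toLin' M).exists_leftInverse_of_injective
      (by rw [LinearMap.ker_eq_bot, Matrix.toLin'_apply']; exact hinj)
    refine ⟨LinearMap.toMatrix' g, ?_⟩
    have := congrArg LinearMap.toMatrix' hg
    rwa [LinearMap.toMatrix'_comp, LinearMap.toMatrix'_toLin',
      LinearMap.toMatrix'_id] at this
end

section
/- Let a < b be reals, let δ > 0, η > 0, C₁ ≥ 0, C₂ ≥ 0 with C₂ η < 2 and b − a ≤ η δ. Let g, h : [a,b] → ℝ be continuous functions with g ≥ 0 and h ≥ δ on [a,b], such that for all u, u' ∈ [a,b]: |g(u) − g(u')| ≤ C₁ |h(u) − h(u')| and |h(u) − h(u')| ≤ C₂ |u − u'|. Then for every u' ∈ [a,b]: (∫_a^b g) / (∫_a^b h) ≤ (g(u')/h(u')) · 1/(1 − C₂η/2) + (C₁C₂η/2)/(1 − C₂η/2). -/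
/-!
Compare both integrands with their value at `u'`: `g u ≤ g u' + C₁ C₂ |u - u'|` and
`h u ≥ h u' - C₂ |u - u'|`, and `∫ |u - u'| ≤ (b - a)² / 2`. Since `b - a ≤ η δ ≤ η h u'`,
this gives `∫ g ≤ (b - a) (g u' + C₁ C₂ η h u' / 2)` and `∫ h ≥ (b - a) h u' (1 - C₂ η / 2)`; divide.
-/

open Set MeasureTheory

theorem integral_abs_sub_of_mem_Icc {a b c : ℝ} (hc : c ∈ Icc a b) :
    ∫ u in a..b, |u - c| = ((c - a) ^ 2 + (b - c) ^ 2) / 2 := by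
  have hint (x y : ℝ) : IntervalIntegrable (fun u ↦ |u - c|) volume x y :=
    (continuous_abs.comp (continuous_sub_right c)).intervalIntegrable x y
  have half (x : ℝ) : ∫ u in uIoc c x, |u - c| = (x - c) ^ 2 / 2 := by
    simpa [sq_abs, one_add_one_eq_two] using integral_pow_abs_sub_uIoc (a := c) (b := x) 1
  rw [← intervalIntegral.integral_add_adjacent_intervals (hint a c) (hint c b),
    intervalIntegral.integral_of_le hc.1, intervalIntegral.integral_of_le hc.2,
    ← uIoc_of_ge hc.1, ← uIoc_of_le hc.2, half, half]
  ring

theorem integral_abs_sub_le_of_mem_Icc {a b c : ℝ} (hc : c ∈ Icc a b) :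
    ∫ u in a..b, |u - c| ≤ (b - a) ^ 2 / 2 := by
  rw [integral_abs_sub_of_mem_Icc hc]
  nlinarith [mul_nonneg (sub_nonneg.2 hc.1) (sub_nonneg.2 hc.2)]

theorem continuousOn_of_abs_sub_le {f : ℝ → ℝ} {s : Set ℝ} {K : ℝ}
    (hf : ∀ x ∈ s, ∀ y ∈ s, |f x - f y| ≤ K * |x - y|) : ContinuousOn f s :=
  (LipschitzOnWith.of_dist_le_mul (K := K.toNNReal) fun x hx y hy ↦ by
    simpa [Real.dist_eq] using (hf x hx y hy).trans
      (mul_le_mul_of_nonneg_right (le_max_left K 0) (abs_nonneg _))).continuousOn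

theorem abs_integral_sub_mul_le_of_abs_sub_le {f : ℝ → ℝ} {a b c K : ℝ} (hab : a ≤ b)
    (hc : c ∈ Icc a b) (hK : 0 ≤ K) (hf : IntervalIntegrable f volume a b)
    (hfc : ∀ u ∈ Icc a b, |f u - f c| ≤ K * |u - c|) :
    |(∫ u in a..b, f u) - (b - a) * f c| ≤ K * ((b - a) ^ 2 / 2) := by
  have hdist : IntervalIntegrable (fun u ↦ K * |u - c|) volume a b :=
    (continuous_const.mul (continuous_abs.comp (continuous_sub_right c))).intervalIntegrable a b
  calc |(∫ u in a..b, f u) - (b - a) * f c| = |∫ u in a..b, (f u - f c)| := by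
        rw [intervalIntegral.integral_sub hf intervalIntegrable_const,
          intervalIntegral.integral_const, smul_eq_mul]
    _ ≤ ∫ u in a..b, K * |u - c| := by
        simpa only [Real.norm_eq_abs] using
          intervalIntegral.norm_integral_le_of_norm_le (f := fun u ↦ f u - f c) hab
            (Filter.Eventually.of_forall fun u hu ↦ by
              simpa only [Real.norm_eq_abs] using hfc u (Ioc_subset_Icc_self hu)) hdist
    _ ≤ K * ((b - a) ^ 2 / 2) := by
        rw [intervalIntegral.integral_const_mul]
        exact mul_le_mul_of_nonneg_left (integral_abs_sub_le_of_mem_Icc hc) hK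

theorem stmt_15_general (a b : ℝ) (hab : a < b) (δ η C₁ C₂ : ℝ)
    (hδ : 0 < δ) (hη : 0 < η) (hC₁ : 0 ≤ C₁) (hC₂ : 0 ≤ C₂)
    (hsmall : C₂ * η < 2) (hlen : b - a ≤ η * δ)
    (g h : ℝ → ℝ)
    (hg0 : ∀ u ∈ Set.Icc a b, 0 ≤ g u) (hhδ : ∀ u ∈ Set.Icc a b, δ ≤ h u)
    (hLip1 : ∀ u ∈ Set.Icc a b, ∀ u' ∈ Set.Icc a b, |g u - g u'| ≤ C₁ * |h u - h u'|)
    (hLip2 : ∀ u ∈ Set.Icc a b, ∀ u' ∈ Set.Icc a b, |h u - h u'| ≤ C₂ * |u - u'|) :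
    ∀ u' ∈ Set.Icc a b,
      (∫ u in a..b, g u) / (∫ u in a..b, h u)
        ≤ (g u' / h u') * (1 / (1 - C₂ * η / 2))
          + (C₁ * C₂ * η / 2) / (1 - C₂ * η / 2) := by
  intro c hc
  have hgLip : ∀ u ∈ Icc a b, ∀ u' ∈ Icc a b, |g u - g u'| ≤ C₁ * C₂ * |u - u'| :=
    fun u hu u' hu' ↦ by
      simpa only [mul_assoc] using (hLip1 u hu u' hu').trans (by gcongr; exact hLip2 u hu u' hu')
  have hint (f : ℝ → ℝ) (K : ℝ)
      (hf : ∀ u ∈ Icc a b, ∀ u' ∈ Icc a b, |f u - f u'| ≤ K * |u - u'|) :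
      IntervalIntegrable f volume a b :=
    (continuousOn_of_abs_sub_le hf).intervalIntegrable_of_Icc hab.le
  have hgApprox := abs_sub_le_iff.1 <| abs_integral_sub_mul_le_of_abs_sub_le hab.le hc
    (by positivity) (hint g _ hgLip) fun u hu ↦ hgLip u hu c hc
  have hhApprox := abs_sub_le_iff.1 <| abs_integral_sub_mul_le_of_abs_sub_le hab.le hc hC₂
    (hint h _ hLip2) fun u hu ↦ hLip2 u hu c hc
  have hhc : 0 < h c := hδ.trans_le (hhδ c hc)
  have hshort : (b - a) * (b - a) ≤ (b - a) * (η * h c) :=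
    mul_le_mul_of_nonneg_left (hlen.trans (mul_le_mul_of_nonneg_left (hhδ c hc) hη.le))
      (by linarith)
  have hnum : ∫ u in a..b, g u ≤ (b - a) * (g c + C₁ * C₂ * η * h c / 2) := by
    linarith [mul_le_mul_of_nonneg_left hshort (mul_nonneg hC₁ hC₂)]
  have hden : (b - a) * (h c * (1 - C₂ * η / 2)) ≤ ∫ u in a..b, h u := by
    linarith [mul_le_mul_of_nonneg_left hshort hC₂]
  have hpos : 0 < h c * (1 - C₂ * η / 2) := mul_pos hhc (by linarith)
  have hg0c := hg0 c hc
  calc (∫ u in a..b, g u) / (∫ u in a..b, h u)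
      ≤ (b - a) * (g c + C₁ * C₂ * η * h c / 2) / ((b - a) * (h c * (1 - C₂ * η / 2))) :=
        div_le_div₀ (mul_nonneg (by linarith) (by positivity)) hnum
          (mul_pos (by linarith) hpos) hden
    _ = g c / h c * (1 / (1 - C₂ * η / 2)) + C₁ * C₂ * η / 2 / (1 - C₂ * η / 2) := by
        field_simp [hhc.ne', (sub_pos.2 hab).ne']

/-- Discretization lemma, upper bound: under the coupled Lipschitz conditions
and `h ≥ δ`, on an interval of length at most `η δ`, the ratio of integrals is
bounded above in terms of any pointwise ratio `g u' / h u'`. -/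
theorem stmt_15 (a b : ℝ) (hab : a < b) (δ η C₁ C₂ : ℝ)
    (hδ : 0 < δ) (hη : 0 < η) (hC₁ : 0 ≤ C₁) (hC₂ : 0 ≤ C₂)
    (hsmall : C₂ * η < 2) (hlen : b - a ≤ η * δ)
    (g h : ℝ → ℝ)
    (hg : ContinuousOn g (Set.Icc a b)) (hh : ContinuousOn h (Set.Icc a b))
    (hg0 : ∀ u ∈ Set.Icc a b, 0 ≤ g u) (hhδ : ∀ u ∈ Set.Icc a b, δ ≤ h u)
    (hLip1 : ∀ u ∈ Set.Icc a b, ∀ u' ∈ Set.Icc a b, |g u - g u'| ≤ C₁ * |h u - h u'|)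
    (hLip2 : ∀ u ∈ Set.Icc a b, ∀ u' ∈ Set.Icc a b, |h u - h u'| ≤ C₂ * |u - u'|) :
    ∀ u' ∈ Set.Icc a b,
      (∫ u in a..b, g u) / (∫ u in a..b, h u)
        ≤ (g u' / h u') * (1 / (1 - C₂ * η / 2))
          + (C₁ * C₂ * η / 2) / (1 - C₂ * η / 2) :=
  stmt_15_general a b hab δ η C₁ C₂ hδ hη hC₁ hC₂ hsmall hlen g h hg0 hhδ hLip1 hLip2
end

section
/- Let a < b be reals, let δ > 0, η > 0, C₁ ≥ 0, C₂ ≥ 0 with b − a ≤ η δ. Let g, h : [a,b] → ℝ be continuous functions with g ≥ 0 and h ≥ δ on [a,b], such that for all u, u' ∈ [a,b]: |g(u) − g(u')| ≤ C₁ |h(u) − h(u')| and |h(u) − h(u')| ≤ C₂ |u − u'|. Then for every u' ∈ [a,b]: (∫_a^b g) / (∫_a^b h) ≥ (g(u')/h(u')) · 1/(1 + C₂η/2) − (C₁C₂η/2)/(1 + C₂η/2). -/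
/-!
Write `D = ∫ |h u - h u'|`. Integrating the pointwise bounds `g u ≥ g u' - C₁ |h u - h u'|` and
`h u ≤ h u' + |h u - h u'|` gives `∫ g / ∫ h ≥ (r - C₁ ε) / (1 + ε)` with `r = g u' / h u'` and
`ε = D / ((b - a) h u')`. The right side decreases in `ε`, and `ε ≤ C₂ η / 2` because
`D ≤ C₂ ∫ |u - u'| ≤ C₂ (b - a)² / 2` while `b - a ≤ η δ ≤ η h u'`.
-/

open intervalIntegral Set

theorem integral_abs_sub_eq {a b c : ℝ} (hac : a ≤ c) (hcb : c ≤ b) :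
    ∫ u in a..b, |u - c| = ((c - a) ^ 2 + (b - c) ^ 2) / 2 := by
  have hint : ∀ p q : ℝ, IntervalIntegrable (fun u => |u - c|) MeasureTheory.volume p q :=
    fun p q => (continuous_id.sub continuous_const).abs.intervalIntegrable p q
  have hleft : ∫ u in a..c, |u - c| = (c - a) ^ 2 / 2 := by
    rw [integral_congr (g := fun u => c - u) fun u hu => by
      rw [uIcc_of_le hac] at hu; simp [abs_of_nonpos (sub_nonpos.2 hu.2)]]
    rw [integral_sub intervalIntegrable_const intervalIntegrable_id]
    simp; ring
  have hright : ∫ u in c..b, |u - c| = (b - c) ^ 2 / 2 := by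
    rw [integral_congr (g := fun u => u - c) fun u hu => by
      rw [uIcc_of_le hcb] at hu; simp [abs_of_nonneg (sub_nonneg.2 hu.1)]]
    rw [integral_sub intervalIntegrable_id intervalIntegrable_const]
    simp; ring
  rw [← integral_add_adjacent_intervals (hint a c) (hint c b), hleft, hright]
  ring

theorem integral_abs_sub_le {a b c : ℝ} (hac : a ≤ c) (hcb : c ≤ b) :
    ∫ u in a..b, |u - c| ≤ (b - a) ^ 2 / 2 := by
  rw [integral_abs_sub_eq hac hcb]
  nlinarith [mul_nonneg (sub_nonneg.2 hac) (sub_nonneg.2 hcb)]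

theorem integral_abs_sub_le_of_lipschitzOn {f : ℝ → ℝ} {a b c K : ℝ} (hK : 0 ≤ K)
    (hc : c ∈ Icc a b) (hf : ContinuousOn f (Icc a b))
    (hLip : ∀ u ∈ Icc a b, |f u - f c| ≤ K * |u - c|) :
    ∫ u in a..b, |f u - f c| ≤ K * ((b - a) ^ 2 / 2) := by
  have hab : a ≤ b := hc.1.trans hc.2
  calc ∫ u in a..b, |f u - f c|
      ≤ ∫ u in a..b, K * |u - c| :=
        integral_mono_on hab ((hf.sub continuousOn_const).abs.intervalIntegrable_of_Icc hab)
          ((continuous_const.mul (continuous_id.sub continuous_const).abs).intervalIntegrable a b)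
          hLip
    _ = K * ∫ u in a..b, |u - c| := integral_const_mul K _
    _ ≤ K * ((b - a) ^ 2 / 2) := mul_le_mul_of_nonneg_left (integral_abs_sub_le hc.1 hc.2) hK

theorem sub_mul_div_one_add_antitone {r C ε κ : ℝ} (hrC : 0 ≤ r + C) (hε : 0 ≤ ε) (hεκ : ε ≤ κ) :
    (r - C * κ) / (1 + κ) ≤ (r - C * ε) / (1 + ε) := by
  rw [div_le_div_iff₀ (by linarith) (by linarith)]
  nlinarith [mul_nonneg hrC (sub_nonneg.2 hεκ)]

section DeviationBounds

variable {a b c : ℝ} {g h : ℝ → ℝ}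

theorem integral_le_mul_add_integral_abs_sub (hab : a ≤ b) (hh : ContinuousOn h (Icc a b)) :
    ∫ u in a..b, h u ≤ (b - a) * h c + ∫ u in a..b, |h u - h c| := by
  have hdev := (hh.sub (continuousOn_const (c := h c))).abs.intervalIntegrable_of_Icc
    (μ := MeasureTheory.volume) hab
  have := integral_mono_on hab (hh.intervalIntegrable_of_Icc hab)
    (intervalIntegrable_const.add hdev) fun u _ =>
      show h u ≤ h c + |h u - h c| by linarith [le_abs_self (h u - h c)]
  rwa [integral_add intervalIntegrable_const hdev, integral_const, smul_eq_mul] at this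

theorem mul_sub_mul_integral_abs_sub_le_integral {C : ℝ} (hab : a ≤ b)
    (hg : ContinuousOn g (Icc a b)) (hh : ContinuousOn h (Icc a b))
    (hgh : ∀ u ∈ Icc a b, |g u - g c| ≤ C * |h u - h c|) :
    (b - a) * g c - C * ∫ u in a..b, |h u - h c| ≤ ∫ u in a..b, g u := by
  have hdev := ((hh.sub (continuousOn_const (c := h c))).abs.intervalIntegrable_of_Icc
    (μ := MeasureTheory.volume) hab).const_mul C
  have := integral_mono_on hab (intervalIntegrable_const.sub hdev)
    (hg.intervalIntegrable_of_Icc hab) fun u hu =>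
      show g c - C * |h u - h c| ≤ g u by linarith [neg_abs_le (g u - g c), hgh u hu]
  rwa [integral_sub intervalIntegrable_const hdev, integral_const_mul, integral_const,
    smul_eq_mul] at this

end DeviationBounds

/-- Discretization lemma, lower bound: under the coupled Lipschitz conditions
and `h ≥ δ`, on an interval of length at most `η δ`, the ratio of integrals is
bounded below in terms of any pointwise ratio `g u' / h u'`. -/
theorem stmt_16 (a b : ℝ) (hab : a < b) (δ η C₁ C₂ : ℝ)
    (hδ : 0 < δ) (hη : 0 < η) (hC₁ : 0 ≤ C₁) (hC₂ : 0 ≤ C₂)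
    (hlen : b - a ≤ η * δ)
    (g h : ℝ → ℝ)
    (hg : ContinuousOn g (Set.Icc a b)) (hh : ContinuousOn h (Set.Icc a b))
    (hg0 : ∀ u ∈ Set.Icc a b, 0 ≤ g u) (hhδ : ∀ u ∈ Set.Icc a b, δ ≤ h u)
    (hLip1 : ∀ u ∈ Set.Icc a b, ∀ u' ∈ Set.Icc a b, |g u - g u'| ≤ C₁ * |h u - h u'|)
    (hLip2 : ∀ u ∈ Set.Icc a b, ∀ u' ∈ Set.Icc a b, |h u - h u'| ≤ C₂ * |u - u'|) :
    ∀ u' ∈ Set.Icc a b,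
      (∫ u in a..b, g u) / (∫ u in a..b, h u)
        ≥ (g u' / h u') * (1 / (1 + C₂ * η / 2))
          - (C₁ * C₂ * η / 2) / (1 + C₂ * η / 2) := by
  intro c hc
  set L := b - a
  set D := ∫ u in a..b, |h u - h c|
  have hL : 0 < L := sub_pos.2 hab
  have hhc : 0 < h c := hδ.trans_le (hhδ c hc)
  have hH0 : 0 < ∫ u in a..b, h u :=
    intervalIntegral_pos_of_pos_on (hh.intervalIntegrable_of_Icc hab.le)
      (fun u hu => hδ.trans_le (hhδ u (Ioo_subset_Icc_self hu))) hab
  have hLη : L ≤ η * h c := hlen.trans (mul_le_mul_of_nonneg_left (hhδ c hc) hη.le)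
  have hDκ : D / (L * h c) ≤ C₂ * η / 2 := by
    rw [div_le_iff₀ (by positivity)]
    calc D ≤ C₂ * (L ^ 2 / 2) :=
          integral_abs_sub_le_of_lipschitzOn hC₂ hc hh fun u hu => hLip2 u hu c hc
      _ ≤ C₂ * η / 2 * (L * h c) := by
          nlinarith [mul_le_mul_of_nonneg_left hLη (mul_nonneg hC₂ hL.le)]
  rw [ge_iff_le]
  calc g c / h c * (1 / (1 + C₂ * η / 2)) - C₁ * C₂ * η / 2 / (1 + C₂ * η / 2)
      = (g c / h c - C₁ * (C₂ * η / 2)) / (1 + C₂ * η / 2) := by ring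
    _ ≤ (g c / h c - C₁ * (D / (L * h c))) / (1 + D / (L * h c)) :=
        sub_mul_div_one_add_antitone (add_nonneg (div_nonneg (hg0 c hc) hhc.le) hC₁)
          (div_nonneg (integral_nonneg hab.le fun _ _ => abs_nonneg _) (by positivity)) hDκ
    _ = (L * g c - C₁ * D) / (L * h c + D) := by field_simp
    _ ≤ (∫ u in a..b, g u) / ∫ u in a..b, h u :=
        div_le_div₀ (integral_nonneg hab.le hg0)
          (mul_sub_mul_integral_abs_sub_le_integral hab.le hg hh fun u hu => hLip1 u hu c hc)
          hH0 (integral_le_mul_add_integral_abs_sub hab.le hh)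
end
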